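/- Let L be an infinite flat bounded lattice, regarded as a structure for the first-order language with two binary function symbols interpreted as the lattice operations ⊓ and ⊔. Then for every n ∈ ℕ, every set R ⊆ Lⁿ that is definable in this structure by a first-order formula with parameters c₁, …, c_k ∈ L is definable with the parameters c₁, …, c_k, ⊥, ⊤ by a first-order formula of the empty language (i.e., using only equality) over the underlying set L. -/

import Mathlib

universe u

open FirstOrder

/-- Function symbols of the language of lattices: two binary operations
(`false` for `⊓`, `true` for `⊔`). -/
def latticeFun : ℕ → Type
  | 2 => Bool
  | _ => Empty

/-- The first-order language with two binary function symbols (for `⊓` and `⊔`). -/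
def latticeLang : Language :=
  ⟨latticeFun, fun _ => Empty⟩

/-- The natural `latticeLang`-structure on a lattice. -/
def latticeStructure (L : Type u) [Lattice L] : latticeLang.Structure L where
  funMap {n} f x :=
    match n, f, x with
    | 0, f, _ => f.elim
    | 1, f, _ => f.elim
    | 2, false, x => x 0 ⊓ x 1
    | 2, true, x => x 0 ⊔ x 1
    | (_ + 3), f, _ => f.elim
  RelMap {n} r _ := r.elim

namespace Stmt9Aux

open FirstOrder Language Set

attribute [local instance] latticeStructure

variable {L : Type u}

section EmptyLang

variable [Language.empty.Structure L] {α : Type} (S : Set L)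

lemma def_eq (i j : α) : S.Definable Language.empty {v : α → L | v i = v j} :=
  ⟨Term.equal (Term.var i) (Term.var j), by ext v; simp⟩

lemma def_eq_const (i : α) {a : L} (ha : a ∈ S) :
    S.Definable Language.empty {v : α → L | v i = a} :=
  ⟨Term.equal (Term.var i) ((Language.con Language.empty (⟨a, ha⟩ : S)).term), by
    ext v; simp⟩

end EmptyLang

section FlatLattice

variable [Lattice L] [BoundedOrder L]

lemma meet_iff (hflat : ∀ a b : L, a ≤ b → a = ⊥ ∨ b = ⊤ ∨ a = b) (a b y : L) :
    a ⊓ b = y ↔ (a = b ∧ y = a) ∨ (a = ⊤ ∧ y = b) ∨ (b = ⊤ ∧ y = a) ∨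
      (¬a = b ∧ (¬a = ⊤ ∧ (¬b = ⊤ ∧ y = ⊥))) := by
  have hmeet : ¬a = b → ¬a = ⊤ → ¬b = ⊤ → a ⊓ b = ⊥ := by
    intro hab ha hb
    rcases hflat (a ⊓ b) a inf_le_left with h | h | h
    · exact h
    · exact absurd h ha
    · rcases hflat a b (h ▸ inf_le_right) with h' | h' | h'
      · rw [h, h']
      · exact absurd h' hb
      · exact absurd h' hab
  constructor
  · rintro rfl
    by_cases hab : a = b
    · exact Or.inl ⟨hab, inf_eq_left.2 hab.le⟩
    by_cases ha : a = ⊤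
    · exact Or.inr (Or.inl ⟨ha, by rw [ha, top_inf_eq]⟩)
    by_cases hb : b = ⊤
    · exact Or.inr (Or.inr (Or.inl ⟨hb, by rw [hb, inf_top_eq]⟩))
    · exact Or.inr (Or.inr (Or.inr ⟨hab, ha, hb, hmeet hab ha hb⟩))
  · rintro (⟨h, rfl⟩ | ⟨h, rfl⟩ | ⟨h, rfl⟩ | ⟨hab, ha, hb, rfl⟩)
    · simp [h]
    · simp [h]
    · simp [h]
    · exact hmeet hab ha hb

lemma join_iff (hflat : ∀ a b : L, a ≤ b → a = ⊥ ∨ b = ⊤ ∨ a = b) (a b y : L) :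
    a ⊔ b = y ↔ (a = b ∧ y = a) ∨ (a = ⊥ ∧ y = b) ∨ (b = ⊥ ∧ y = a) ∨
      (¬a = b ∧ (¬a = ⊥ ∧ (¬b = ⊥ ∧ y = ⊤))) := by
  have hjoin : ¬a = b → ¬a = ⊥ → ¬b = ⊥ → a ⊔ b = ⊤ := by
    intro hab ha hb
    rcases hflat a (a ⊔ b) le_sup_left with h | h | h
    · exact absurd h ha
    · exact h
    · rcases hflat b a (by rw [h]; exact le_sup_right) with h' | h' | h'
      · exact absurd h' hb
      · rw [h', top_sup_eq]
      · exact absurd h'.symm hab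
  constructor
  · rintro rfl
    by_cases hab : a = b
    · exact Or.inl ⟨hab, sup_eq_left.2 hab.ge⟩
    by_cases ha : a = ⊥
    · exact Or.inr (Or.inl ⟨ha, by rw [ha, bot_sup_eq]⟩)
    by_cases hb : b = ⊥
    · exact Or.inr (Or.inr (Or.inl ⟨hb, by rw [hb, sup_bot_eq]⟩))
    · exact Or.inr (Or.inr (Or.inr ⟨hab, ha, hb, hjoin hab ha hb⟩))
  · rintro (⟨h, rfl⟩ | ⟨h, rfl⟩ | ⟨h, rfl⟩ | ⟨hab, ha, hb, rfl⟩)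
    · simp [h]
    · simp [h]
    · simp [h]
    · exact hjoin hab ha hb

variable [Language.empty.Structure L] {α : Type} (S : Set L)

lemma def_meet (hflat : ∀ a b : L, a ≤ b → a = ⊥ ∨ b = ⊤ ∨ a = b)
    (hbot : (⊥ : L) ∈ S) (htop : (⊤ : L) ∈ S) (i j o : α) :
    S.Definable Language.empty {v : α → L | v i ⊓ v j = v o} := by
  have h : {v : α → L | v i ⊓ v j = v o} =
      ({v : α → L | v i = v j} ∩ {v : α → L | v o = v i}) ∪
      (({v : α → L | v i = ⊤} ∩ {v : α → L | v o = v j}) ∪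
      (({v : α → L | v j = ⊤} ∩ {v : α → L | v o = v i}) ∪
      ({v : α → L | v i = v j}ᶜ ∩ ({v : α → L | v i = ⊤}ᶜ ∩
        ({v : α → L | v j = ⊤}ᶜ ∩ {v : α → L | v o = ⊥}))))) := by
    ext v
    simp only [mem_setOf_eq, mem_union, mem_inter_iff, mem_compl_iff]
    exact meet_iff hflat _ _ _
  rw [h]
  exact ((def_eq S i j).inter (def_eq S o i)).union
    (((def_eq_const S i htop).inter (def_eq S o j)).union
    (((def_eq_const S j htop).inter (def_eq S o i)).union
    ((def_eq S i j).compl.inter ((def_eq_const S i htop).compl.inter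
    ((def_eq_const S j htop).compl.inter (def_eq_const S o hbot))))))

lemma def_join (hflat : ∀ a b : L, a ≤ b → a = ⊥ ∨ b = ⊤ ∨ a = b)
    (hbot : (⊥ : L) ∈ S) (htop : (⊤ : L) ∈ S) (i j o : α) :
    S.Definable Language.empty {v : α → L | v i ⊔ v j = v o} := by
  have h : {v : α → L | v i ⊔ v j = v o} =
      ({v : α → L | v i = v j} ∩ {v : α → L | v o = v i}) ∪
      (({v : α → L | v i = ⊥} ∩ {v : α → L | v o = v j}) ∪
      (({v : α → L | v j = ⊥} ∩ {v : α → L | v o = v i}) ∪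
      ({v : α → L | v i = v j}ᶜ ∩ ({v : α → L | v i = ⊥}ᶜ ∩
        ({v : α → L | v j = ⊥}ᶜ ∩ {v : α → L | v o = ⊤}))))) := by
    ext v
    simp only [mem_setOf_eq, mem_union, mem_inter_iff, mem_compl_iff]
    exact join_iff hflat _ _ _
  rw [h]
  exact ((def_eq S i j).inter (def_eq S o i)).union
    (((def_eq_const S i hbot).inter (def_eq S o j)).union
    (((def_eq_const S j hbot).inter (def_eq S o i)).union
    ((def_eq S i j).compl.inter ((def_eq_const S i hbot).compl.inter
    ((def_eq_const S j hbot).compl.inter (def_eq_const S o htop))))))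

end FlatLattice

section Terms

variable [Lattice L] [BoundedOrder L] [Language.empty.Structure L]
variable {A S : Set L}

lemma realize_inf {γ : Type} (v : γ → L) (ts : Fin 2 → (latticeLang[[A]]).Term γ) :
    Term.realize v (Term.func (Sum.inl false) ts)
      = Term.realize v (ts 0) ⊓ Term.realize v (ts 1) := rfl

lemma realize_sup' {γ : Type} (v : γ → L) (ts : Fin 2 → (latticeLang[[A]]).Term γ) :
    Term.realize v (Term.func (Sum.inl true) ts)
      = Term.realize v (ts 0) ⊔ Term.realize v (ts 1) := rfl

lemma term_graph (hflat : ∀ a b : L, a ≤ b → a = ⊥ ∨ b = ⊤ ∨ a = b)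
    (hAS : ∀ a : A, (a : L) ∈ S) (hbot : (⊥ : L) ∈ S) (htop : (⊤ : L) ∈ S)
    {γ : Type} [Finite γ] (t : (latticeLang[[A]]).Term γ) :
    S.Definable Language.empty
      {w : γ ⊕ Unit → L | t.realize (w ∘ Sum.inl) = w (Sum.inr ())} := by
  induction t with
  | var i => exact def_eq S (Sum.inl i) (Sum.inr ())
  | @func l f ts ih =>
    match l, f with
    | 0, Sum.inl f => exact f.elim
    | 1, Sum.inl f => exact f.elim
    | (l + 3), Sum.inl f => exact f.elim
    | 1, Sum.inr f => exact f.elim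
    | 2, Sum.inr f => exact f.elim
    | (l + 3), Sum.inr f => exact f.elim
    | 0, Sum.inr a =>
      have hts : Term.func (Sum.inr a) ts = ((latticeLang.con (show ↑A from a)).term : (latticeLang[[A]]).Term γ) := by
        unfold Constants.term Language.con
        exact congrArg _ (Subsingleton.elim _ _)
      have h : {w : γ ⊕ Unit → L |
            Term.realize (w ∘ Sum.inl) (Term.func (Sum.inr a) ts) = w (Sum.inr ())}
          = {w : γ ⊕ Unit → L | w (Sum.inr ()) = (a : L)} := by
        ext w
        rw [mem_setOf_eq, mem_setOf_eq, hts, Term.realize_con, eq_comm]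
        exact Iff.rfl
      rw [h]
      exact def_eq_const S _ (hAS (show ↑A from a))
    | 2, Sum.inl b =>
      -- common machinery for meet and join
      have key : ∀ (op : L → L → L),
          (S.Definable Language.empty
            {v : ((γ ⊕ Unit) ⊕ Fin 2) → L |
              op (v (Sum.inr 0)) (v (Sum.inr 1)) = v (Sum.inl (Sum.inr ()))}) →
          S.Definable Language.empty
            {w : γ ⊕ Unit → L |
              op (Term.realize (w ∘ Sum.inl) (ts 0)) (Term.realize (w ∘ Sum.inl) (ts 1))
                = w (Sum.inr ())} := by
        intro op hop
        let ρ : Fin 2 → ((γ ⊕ Unit) → ((γ ⊕ Unit) ⊕ Fin 2)) := fun i =>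
          Sum.elim (Sum.inl ∘ Sum.inl) (fun _ => Sum.inr i)
        have hbig := (((((ih 0).preimage_comp (ρ 0)).inter
          ((ih 1).preimage_comp (ρ 1))).inter hop).image_comp_embedding
          (⟨Sum.inl, Sum.inl_injective⟩ : (γ ⊕ Unit) ↪ ((γ ⊕ Unit) ⊕ Fin 2)))
        convert hbig using 1
        ext w
        simp only [mem_setOf_eq, mem_image, mem_inter_iff, mem_preimage]
        constructor
        · intro hw
          refine ⟨Sum.elim w (fun i => Term.realize (w ∘ Sum.inl) (ts i)), ⟨⟨?_, ?_⟩, ?_⟩, ?_⟩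
          · exact rfl
          · exact rfl
          · exact hw
          · exact rfl
        · rintro ⟨W, ⟨⟨h0, h1⟩, h2⟩, rfl⟩
          have e0 : Term.realize ((W ∘ Sum.inl) ∘ Sum.inl) (ts 0) = W (Sum.inr 0) := h0
          have e1 : Term.realize ((W ∘ Sum.inl) ∘ Sum.inl) (ts 1) = W (Sum.inr 1) := h1
          show op (Term.realize ((W ∘ Sum.inl) ∘ Sum.inl) (ts 0))
            (Term.realize ((W ∘ Sum.inl) ∘ Sum.inl) (ts 1)) = W (Sum.inl (Sum.inr ()))
          rw [e0, e1]
          exact h2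
      cases b with
      | false =>
        have h : {w : γ ⊕ Unit → L |
              Term.realize (w ∘ Sum.inl) (Term.func (Sum.inl false) ts) = w (Sum.inr ())}
            = {w : γ ⊕ Unit → L |
              (Term.realize (w ∘ Sum.inl) (ts 0)) ⊓ (Term.realize (w ∘ Sum.inl) (ts 1))
                = w (Sum.inr ())} := by
          ext w; rw [mem_setOf_eq, mem_setOf_eq, realize_inf]
        refine (congrArg (S.Definable Language.empty) h).mpr ?_
        exact key (· ⊓ ·) (def_meet S hflat hbot htop _ _ _)
      | true =>
        have h : {w : γ ⊕ Unit → L |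
              Term.realize (w ∘ Sum.inl) (Term.func (Sum.inl true) ts) = w (Sum.inr ())}
            = {w : γ ⊕ Unit → L |
              (Term.realize (w ∘ Sum.inl) (ts 0)) ⊔ (Term.realize (w ∘ Sum.inl) (ts 1))
                = w (Sum.inr ())} := by
          ext w; rw [mem_setOf_eq, mem_setOf_eq, realize_sup']
        refine (congrArg (S.Definable Language.empty) h).mpr ?_
        exact key (· ⊔ ·) (def_join S hflat hbot htop _ _ _)

lemma terms_eq_def (hflat : ∀ a b : L, a ≤ b → a = ⊥ ∨ b = ⊤ ∨ a = b)
    (hAS : ∀ a : A, (a : L) ∈ S) (hbot : (⊥ : L) ∈ S) (htop : (⊤ : L) ∈ S)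
    {γ : Type} [Finite γ] (t₁ t₂ : (latticeLang[[A]]).Term γ) :
    S.Definable Language.empty {z : γ → L | t₁.realize z = t₂.realize z} := by
  have h := ((term_graph hflat hAS hbot htop t₁).inter
    (term_graph hflat hAS hbot htop t₂)).image_comp_embedding
    (⟨Sum.inl, Sum.inl_injective⟩ : γ ↪ (γ ⊕ Unit))
  convert h using 1
  ext z
  simp only [mem_setOf_eq, mem_image, mem_inter_iff]
  constructor
  · intro hz
    exact ⟨Sum.elim z (fun _ => t₁.realize z), ⟨rfl, hz.symm⟩, rfl⟩
  · rintro ⟨W, ⟨h1, h2⟩, rfl⟩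
    exact h1.trans h2.symm

end Terms

section Formulas

variable [Lattice L] [BoundedOrder L] [Language.empty.Structure L]
variable {A S : Set L}

lemma bform_def (hflat : ∀ a b : L, a ≤ b → a = ⊥ ∨ b = ⊤ ∨ a = b)
    (hAS : ∀ a : A, (a : L) ∈ S) (hbot : (⊥ : L) ∈ S) (htop : (⊤ : L) ∈ S)
    {α : Type} [Finite α] {m : ℕ}
    (φ : (latticeLang[[A]]).BoundedFormula α m) :
    S.Definable Language.empty
      {z : α ⊕ Fin m → L | φ.Realize (z ∘ Sum.inl) (z ∘ Sum.inr)} := by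
  induction φ with
  | falsum =>
    refine ⟨⊥, ?_⟩
    ext z
    simp [BoundedFormula.Realize]
  | @equal m t₁ t₂ =>
    have hz : ∀ z : α ⊕ Fin m → L, Sum.elim (z ∘ Sum.inl) (z ∘ Sum.inr) = z := fun z =>
      funext fun x => by cases x <;> rfl
    have h : {z : α ⊕ Fin m → L |
          BoundedFormula.Realize (BoundedFormula.equal t₁ t₂) (z ∘ Sum.inl) (z ∘ Sum.inr)}
        = {z : α ⊕ Fin m → L | t₁.realize z = t₂.realize z} := by
      ext z
      rw [mem_setOf_eq, mem_setOf_eq]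
      show t₁.realize (Sum.elim (z ∘ Sum.inl) (z ∘ Sum.inr))
          = t₂.realize (Sum.elim (z ∘ Sum.inl) (z ∘ Sum.inr)) ↔ _
      rw [hz z]
    rw [h]
    exact terms_eq_def hflat hAS hbot htop t₁ t₂
  | rel R ts =>
    cases R with
    | inl R => exact R.elim
    | inr R => exact R.elim
  | @imp m φ ψ ihφ ihψ =>
    have h : {z : α ⊕ Fin m → L |
          BoundedFormula.Realize (φ.imp ψ) (z ∘ Sum.inl) (z ∘ Sum.inr)}
        = {z : α ⊕ Fin m → L | φ.Realize (z ∘ Sum.inl) (z ∘ Sum.inr)}ᶜ ∪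
          {z : α ⊕ Fin m → L | ψ.Realize (z ∘ Sum.inl) (z ∘ Sum.inr)} := by
      ext z
      simp only [mem_setOf_eq, mem_union, mem_compl_iff, BoundedFormula.realize_imp]
      exact imp_iff_not_or
    rw [h]
    exact ihφ.compl.union ihψ
  | @all m φ ih =>
    set E : (α ⊕ Fin m) ↪ (α ⊕ Fin (m + 1)) :=
      (Function.Embedding.refl α).sumMap
        (⟨Fin.castSucc, Fin.castSucc_injective _⟩ : Fin m ↪ Fin (m + 1)) with hE
    have hset : {z : α ⊕ Fin m → L |
          BoundedFormula.Realize φ.all (z ∘ Sum.inl) (z ∘ Sum.inr)} =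
        ((fun g : (α ⊕ Fin (m + 1)) → L => g ∘ E) ''
          {z : α ⊕ Fin (m + 1) → L | φ.Realize (z ∘ Sum.inl) (z ∘ Sum.inr)}ᶜ)ᶜ := by
      ext z
      rw [mem_setOf_eq, BoundedFormula.realize_all, mem_compl_iff, mem_image]
      constructor
      · intro hz
        rintro ⟨W, hW, hWz⟩
        apply hW
        rw [mem_setOf_eq]
        have h1 : W ∘ Sum.inl = z ∘ Sum.inl := by
          funext a
          rw [← hWz]
          rfl
        have h2 : W ∘ Sum.inr = Fin.snoc (z ∘ Sum.inr) (W (Sum.inr (Fin.last m))) := by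
          funext i
          refine Fin.lastCases ?_ (fun j => ?_) i
          · rw [Fin.snoc_last]
            rfl
          · rw [Fin.snoc_castSucc, ← hWz]
            rfl
        rw [h1, h2]
        exact hz _
      · intro hz x
        by_contra hc
        refine hz ⟨Sum.elim (z ∘ Sum.inl) (Fin.snoc (z ∘ Sum.inr) x), hc, funext fun y => ?_⟩
        cases y with
        | inl a => rfl
        | inr j => simp [hE, Fin.snoc_castSucc]
    rw [hset]
    exact (ih.compl.image_comp_embedding E).compl

end Formulas

end Stmt9Aux

/-- In an infinite flat bounded lattice, every relation `R ⊆ Lⁿ` definable in the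
lattice language `(⊓, ⊔)` with parameters `c₁, …, c_k` is definable from the
parameters `c₁, …, c_k, ⊥, ⊤` in the language of pure equality. -/
theorem stmt9 {L : Type u} [Lattice L] [BoundedOrder L] [Infinite L]
    (hbt : (⊥ : L) ≠ ⊤)
    (hflat : ∀ a b : L, a ≤ b → a = ⊥ ∨ b = ⊤ ∨ a = b)
    (n k : ℕ) (c : Fin k → L) (R : Set (Fin n → L))
    (hdef : letI := latticeStructure L
      Set.Definable (Set.range c) latticeLang R) :
    letI := (Language.emptyStructure : Language.empty.Structure L)
    Set.Definable (Set.range c ∪ {⊥, ⊤}) Language.empty R := by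
  letI := latticeStructure L
  letI : Language.empty.Structure L := Language.emptyStructure
  obtain ⟨φ, hφ⟩ := hdef
  have hAS : ∀ a : ↥(Set.range c), (a : L) ∈ Set.range c ∪ {⊥, ⊤} := fun a => Or.inl a.2
  have hbot : (⊥ : L) ∈ Set.range c ∪ {⊥, ⊤} := Or.inr (by simp)
  have htop : (⊤ : L) ∈ Set.range c ∪ {⊥, ⊤} := Or.inr (by simp)
  have h := (Stmt9Aux.bform_def hflat hAS hbot htop φ).image_comp_embedding
    (⟨Sum.inl, Sum.inl_injective⟩ : Fin n ↪ (Fin n ⊕ Fin 0))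
  convert h using 1
  rw [hφ]
  ext v
  simp only [Set.mem_image, Set.mem_setOf_eq]
  constructor
  · intro hv
    refine ⟨Sum.elim v Fin.elim0, ?_, rfl⟩
    show Language.BoundedFormula.Realize φ _ _
    rw [show ((Sum.elim v Fin.elim0 : Fin n ⊕ Fin 0 → L) ∘ Sum.inr) = (default : Fin 0 → L)
      from Subsingleton.elim _ _]
    exact hv
  · rintro ⟨W, hW, rfl⟩
    show Language.Formula.Realize φ _
    have hW' := hW
    rw [show (W ∘ Sum.inr : Fin 0 → L) = (default : Fin 0 → L)
      from Subsingleton.elim _ _] at hW'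
    exact hW'
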